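/- arXiv:1607.04868 — 2 statements merged into one kernel-verified Lean document; each statement's English description precedes it below -/
import Mathlib

section
/- Let s_1, …, s_k be real numbers and let a, b ∈ ℝ. If both a and b belong to the iterated tropical-real hypersum s_1 ⊞ ⋯ ⊞ s_k, then every element of a ⊞ b also belongs to s_1 ⊞ ⋯ ⊞ s_k. -/
/-!
Every iterated hypersum in `𝕋ℝ` is either a single point or a symmetric closed interval
`{z | |z| ≤ M}` with `M ≥ 0`: adding `a` to a point gives a hypersum of two elements, which has
one of these shapes, and adding `a` to `{z | |z| ≤ M}` gives `{a}` when `|a| > M` and leaves the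
interval unchanged otherwise. Both shapes are closed under `⊞`, since `a ⊞ a = {a}`
and no element of `a ⊞ b` is larger in absolute value than both `a` and `b`.
-/

/-- Hyperaddition in the tropical real hyperfield `𝕋ℝ` on `ℝ`:
`x ⊞ y = {x}` if `|x| > |y|` or `x = y`, `x ⊞ y = {y}` if `|x| < |y|`, and
`x ⊞ y = {z : |z| ≤ |x|}` if `x = −y`. -/
def trAdd (x y : ℝ) : Set ℝ :=
  if |x| > |y| then {x}
  else if |x| < |y| then {y}
  else if x = y then {x}
  else {z | |z| ≤ |x|}

/-- The iterated hypersum of a list: the empty hypersum is `{0}`, and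
`s₁ ⊞ ⋯ ⊞ s_{m+1} = ⋃_{x ∈ s₁ ⊞ ⋯ ⊞ s_m} x ⊞ s_{m+1}`. -/
def hyperSum (add : ℝ → ℝ → Set ℝ) (l : List ℝ) : Set ℝ :=
  l.foldl (fun S a => ⋃ x ∈ S, add x a) {0}

theorem hyperSum_induction {add : ℝ → ℝ → Set ℝ} {P : Set ℝ → Prop} (zero : P {0})
    (step : ∀ S a, P S → P (⋃ x ∈ S, add x a)) (l : List ℝ) : P (hyperSum add l) := by
  suffices ∀ (l : List ℝ) S, P S → P (l.foldl (fun S a => ⋃ x ∈ S, add x a) S) from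
    this l {0} zero
  intro l
  induction l with
  | nil => exact fun _ h => h
  | cons a l ih => exact fun S h => ih _ (step S a h)

section trAdd

variable {x y z : ℝ}

theorem trAdd_of_abs_lt_left (h : |y| < |x|) : trAdd x y = {x} := by
  simp [trAdd, h]

theorem trAdd_of_abs_lt_right (h : |x| < |y|) : trAdd x y = {y} := by
  simp [trAdd, h, h.le.not_gt]

theorem trAdd_self (x : ℝ) : trAdd x x = {x} := by
  simp [trAdd]

theorem mem_trAdd_neg_self (h : |z| ≤ |x|) : z ∈ trAdd (-x) x := by
  rcases eq_or_ne x 0 with rfl | hx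
  · simpa [trAdd_self] using h
  · have : -x ≠ x := fun h => hx (by linarith)
    simpa [trAdd, this] using h

theorem abs_le_max_of_mem_trAdd (h : z ∈ trAdd x y) : |z| ≤ max |x| |y| := by
  unfold trAdd at h
  split_ifs at h <;> simp_all

end trAdd

def IsPointOrSymmInterval (S : Set ℝ) : Prop :=
  (∃ c, S = {c}) ∨ ∃ M, 0 ≤ M ∧ S = {z | |z| ≤ M}

theorem isPointOrSymmInterval_trAdd (x y : ℝ) : IsPointOrSymmInterval (trAdd x y) := by
  unfold trAdd
  split_ifs
  · exact .inl ⟨x, rfl⟩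
  · exact .inl ⟨y, rfl⟩
  · exact .inl ⟨x, rfl⟩
  · exact .inr ⟨|x|, abs_nonneg x, rfl⟩

theorem biUnion_trAdd_symmInterval_of_lt {M a : ℝ} (hM : 0 ≤ M) (ha : M < |a|) :
    ⋃ x ∈ {z : ℝ | |z| ≤ M}, trAdd x a = {a} := by
  ext z
  simp only [Set.mem_iUnion, Set.mem_singleton_iff, exists_prop]
  constructor
  · rintro ⟨x, hx, hz⟩
    rwa [trAdd_of_abs_lt_right (hx.trans_lt ha)] at hz
  · rintro rfl
    exact ⟨0, by simpa using hM, by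
      rw [trAdd_of_abs_lt_right (by simpa using hM.trans_lt ha)]; rfl⟩

theorem biUnion_trAdd_symmInterval_of_le {M a : ℝ} (ha : |a| ≤ M) :
    ⋃ x ∈ {z : ℝ | |z| ≤ M}, trAdd x a = {z | |z| ≤ M} := by
  ext z
  simp only [Set.mem_iUnion, Set.mem_ofPred_eq, exists_prop]
  constructor
  · rintro ⟨x, hx, hz⟩
    exact (abs_le_max_of_mem_trAdd hz).trans (max_le hx ha)
  · intro hz
    rcases lt_or_ge |a| |z| with hza | hza
    · exact ⟨z, hz, by simp [trAdd_of_abs_lt_left hza]⟩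
    · exact ⟨-a, by simpa using ha, mem_trAdd_neg_self hza⟩

theorem IsPointOrSymmInterval.biUnion_trAdd {S : Set ℝ} (hS : IsPointOrSymmInterval S) (a : ℝ) :
    IsPointOrSymmInterval (⋃ x ∈ S, trAdd x a) := by
  rcases hS with ⟨c, rfl⟩ | ⟨M, hM, rfl⟩
  · rw [Set.biUnion_singleton]
    exact isPointOrSymmInterval_trAdd c a
  · rcases lt_or_ge M |a| with ha | ha
    · exact .inl ⟨a, biUnion_trAdd_symmInterval_of_lt hM ha⟩
    · exact .inr ⟨M, hM, biUnion_trAdd_symmInterval_of_le ha⟩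

theorem isPointOrSymmInterval_hyperSum (l : List ℝ) : IsPointOrSymmInterval (hyperSum trAdd l) :=
  hyperSum_induction (.inl ⟨0, rfl⟩) (fun _ a hS => hS.biUnion_trAdd a) l

theorem IsPointOrSymmInterval.trAdd_subset {S : Set ℝ} (hS : IsPointOrSymmInterval S) {a b : ℝ} (ha : a ∈ S)
    (hb : b ∈ S) : trAdd a b ⊆ S := by
  rcases hS with ⟨c, rfl⟩ | ⟨M, -, rfl⟩
  · rw [ha, hb, trAdd_self]
  · exact fun z hz => (abs_le_max_of_mem_trAdd hz).trans (max_le ha hb)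

/-- If `a` and `b` both belong to the iterated tropical-real hypersum
`s 0 ⊞ ⋯ ⊞ s (k-1)`, then so does every element of `a ⊞ b`. -/
theorem tropicalReal_hyperSum_closed (k : ℕ) (s : Fin k → ℝ) (a b : ℝ)
    (ha : a ∈ hyperSum trAdd (List.ofFn s))
    (hb : b ∈ hyperSum trAdd (List.ofFn s)) :
    trAdd a b ⊆ hyperSum trAdd (List.ofFn s) :=
  (isPointOrSymmInterval_hyperSum _).trAdd_subset ha hb
end

section
/- Let E be a finite set and let X, Y, Z : E → ℝ≥0 be functions to the nonnegative reals. If 0 belongs to the iterated triangle hypersum of the family (X(e)·Z(e))_{e∈E} and 0 belongs to the iterated triangle hypersum of the family (Y(e)·Z(e))_{e∈E}, then 0 belongs to the iterated triangle hypersum of the family (max(X(e), Y(e))·Z(e))_{e∈E}. -/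
/-- Hyperaddition in the triangle hyperfield `△` on the nonnegative reals:
`x ⊞ y = {z : |x − y| ≤ z ≤ x + y}`. -/
def triAdd (x y : ℝ) : Set ℝ := {z | |x - y| ≤ z ∧ z ≤ x + y}

/-!
`z` lies in the triangle hypersum of `a₁, …, aₙ` exactly when the `aᵢ` and `z` are
nonnegative and `a₁, …, aₙ, z` satisfy the polygon inequalities `z ≤ ∑ aᵢ` and `aᵢ ≤ ∑ⱼ≠ᵢ aⱼ + z`.
So orthogonality to `Z` says that the numbers `X e * Z e` are the side lengths of a closed,
possibly degenerate, polygon. Replacing each side by the larger of `X e * Z e` and `Y e * Z e`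
enlarges the perimeter, while each new side is still at most half of the perimeter of the
polygon it came from.
-/

theorem hyperSum_nil (add : ℝ → ℝ → Set ℝ) : hyperSum add [] = {0} := rfl

theorem hyperSum_append_singleton (add : ℝ → ℝ → Set ℝ) (l : List ℝ) (b : ℝ) :
    hyperSum add (l ++ [b]) = ⋃ x ∈ hyperSum add l, add x b := by
  simp only [hyperSum, List.foldl_append, List.foldl_cons, List.foldl_nil]

theorem mem_hyperSum_triAdd_iff (l : List ℝ) (z : ℝ) :
    z ∈ hyperSum triAdd l ↔
      (∀ a ∈ l, 0 ≤ a) ∧ 0 ≤ z ∧ z ≤ l.sum ∧ ∀ a ∈ l, 2 * a ≤ l.sum + z := by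
  induction l using List.reverseRecOn generalizing z with
  | nil =>
    simp only [hyperSum_nil, Set.mem_singleton_iff, List.not_mem_nil, List.sum_nil,
      IsEmpty.forall_iff, implies_true, true_and, le_antisymm_iff, and_comm]
  | append_singleton l b ih =>
    simp only [hyperSum_append_singleton, Set.mem_iUnion, exists_prop, ih, triAdd,
      Set.mem_ofPred_eq, List.forall_mem_append, List.forall_mem_singleton, List.sum_append,
      List.sum_singleton, abs_sub_le_iff]
    constructor
    · rintro ⟨x, ⟨hl, hx, hxS, hxl⟩, ⟨hxb, hbx⟩, hzx⟩
      refine ⟨⟨hl, by linarith⟩, by linarith, by linarith,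
        fun a ha => by linarith [hxl a ha], by linarith⟩
    · rintro ⟨⟨hl, hb⟩, hz, hzS, hzl, hzb⟩
      have hS : 0 ≤ l.sum := List.sum_nonneg hl
      have hle : ∀ a ∈ l, a ≤ l.sum := List.single_le_sum hl
      rcases le_total l.sum (b + z) with h | h
      · exact ⟨l.sum, ⟨hl, hS, le_rfl, fun a ha => by linarith [hle a ha]⟩,
          ⟨by linarith, by linarith⟩, by linarith⟩
      · exact ⟨b + z, ⟨hl, by positivity, h, fun a ha => by linarith [hzl a ha]⟩,
          ⟨by linarith, by linarith⟩, by linarith⟩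

theorem zero_mem_hyperSum_triAdd_iff (l : List ℝ) :
    0 ∈ hyperSum triAdd l ↔ ∀ a ∈ l, 0 ≤ a ∧ 2 * a ≤ l.sum := by
  rw [mem_hyperSum_triAdd_iff, add_zero]
  constructor
  · rintro ⟨hl, -, -, h⟩ a ha
    exact ⟨hl a ha, h a ha⟩
  · intro h
    have hl : ∀ a ∈ l, 0 ≤ a := fun a ha => (h a ha).1
    exact ⟨hl, le_rfl, List.sum_nonneg hl, fun a ha => (h a ha).2⟩

section Polygon

variable {E : Type*} [Fintype E]

def IsPolygonal (f : E → ℝ) : Prop := ∀ e, 0 ≤ f e ∧ 2 * f e ≤ ∑ i, f i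

theorem zero_mem_hyperSum_triAdd_map_iff (f : E → ℝ) :
    0 ∈ hyperSum triAdd ((Finset.univ : Finset E).toList.map f) ↔ IsPolygonal f := by
  simp only [zero_mem_hyperSum_triAdd_iff, List.forall_mem_map, Finset.mem_toList,
    Finset.mem_univ, true_implies, Finset.sum_map_toList, IsPolygonal]

theorem IsPolygonal.sup {f g : E → ℝ} (hf : IsPolygonal f) (hg : IsPolygonal g) :
    IsPolygonal (f ⊔ g) := by
  intro e
  rcases le_total (g e) (f e) with h | h
  · rw [Pi.sup_apply, sup_eq_left.2 h]
    exact ⟨(hf e).1, (hf e).2.trans (Finset.sum_le_sum fun i _ => le_sup_left)⟩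
  · rw [Pi.sup_apply, sup_eq_right.2 h]
    exact ⟨(hg e).1, (hg e).2.trans (Finset.sum_le_sum fun i _ => le_sup_right)⟩

end Polygon

theorem triangle_max_composition_general {E : Type*} [Fintype E] (X Y Z : E → ℝ)
    (hZ : ∀ e, 0 ≤ Z e)
    (hXZ : 0 ∈ hyperSum triAdd ((Finset.univ : Finset E).toList.map fun e => X e * Z e))
    (hYZ : 0 ∈ hyperSum triAdd ((Finset.univ : Finset E).toList.map fun e => Y e * Z e)) :
    0 ∈ hyperSum triAdd
      ((Finset.univ : Finset E).toList.map fun e => max (X e) (Y e) * Z e) := by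
  rw [zero_mem_hyperSum_triAdd_map_iff] at hXZ hYZ ⊢
  have hmax : (fun e => max (X e) (Y e) * Z e) = (fun e => X e * Z e) ⊔ fun e => Y e * Z e :=
    funext fun e => max_mul_of_nonneg _ _ (hZ e)
  exact hmax ▸ hXZ.sup hYZ

/-- Triangle-hyperfield case of the max-composition proposition: if `X` and `Y`
(vectors of nonnegative reals indexed by a finite set `E`) are both orthogonal
to `Z`, i.e. `0` lies in the iterated triangle hypersums of the families
`(X e * Z e)` and `(Y e * Z e)`, then the coordinatewise maximum `X ∘ Y` is
also orthogonal to `Z`. -/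
theorem triangle_max_composition {E : Type*} [Fintype E] (X Y Z : E → ℝ)
    (hX : ∀ e, 0 ≤ X e) (hY : ∀ e, 0 ≤ Y e) (hZ : ∀ e, 0 ≤ Z e)
    (hXZ : 0 ∈ hyperSum triAdd ((Finset.univ : Finset E).toList.map fun e => X e * Z e))
    (hYZ : 0 ∈ hyperSum triAdd ((Finset.univ : Finset E).toList.map fun e => Y e * Z e)) :
    0 ∈ hyperSum triAdd
      ((Finset.univ : Finset E).toList.map fun e => max (X e) (Y e) * Z e) :=
  triangle_max_composition_general X Y Z hZ hXZ hYZ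
end
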